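/- Let q be a real number with 0 < q < 1. Then for all integers k ≥ 1 and n ≥ 1, the q-power sum W_{k,q} is given by q-Bernoulli polynomials: Σ_{a=0}^{n−1} q^a · [a]_q^{k} = ( β_{k+1}(n:q) − β_{k+1}(q) ) / (k+1). -/

import Mathlib

open Finset

/-- The q-analogue `[z]_q = (1 - q^z)/(1 - q)` for a real exponent `z`. -/
noncomputable def qn (q z : ℝ) : ℝ := (1 - q ^ z) / (1 - q)

/-- The q-Bernoulli polynomial `β_n(x:q)`:
`β_0(x:q) = (q-1)/log q` and, for `n ≥ 1`,
`β_n(x:q) = ((q-1)/log q)·(1-q)^{-n} - n·Σ_{m≥0} q^{m+x}·[m+x]_q^{n-1}`. -/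
noncomputable def qB (q x : ℝ) : ℕ → ℝ
  | 0 => (q - 1) / Real.log q
  | n + 1 => (q - 1) / Real.log q * ((1 - q) ^ (n + 1))⁻¹
      - ((n : ℝ) + 1) * ∑' m : ℕ, q ^ ((m : ℝ) + x) * qn q ((m : ℝ) + x) ^ n

/-! The series defining `β_{k+1}(x:q)` is a tail sum in steps of `1`, so shifting `x` by `n`
removes the first `n` terms: `β_{k+1}(x+n:q) - β_{k+1}(x:q) = (k+1) Σ_{a<n} q^{a+x}[a+x]_q^k`.
Absolute convergence, needed to split off those terms, holds because `0 ≤ [z]_q ≤ (1-q)⁻¹`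
for `z ≥ 0`, so the terms are dominated by `(1-q)^{-k} q^m`. The theorem is the case `x = 0`. -/

section QBernoulli

variable {q : ℝ} (hq0 : 0 < q) (hq1 : q < 1)
include hq0 hq1

theorem qn_nonneg {z : ℝ} (hz : 0 ≤ z) : 0 ≤ qn q z :=
  div_nonneg (sub_nonneg.2 (Real.rpow_le_one hq0.le hq1.le hz)) (sub_pos.2 hq1).le

theorem qn_le_inv_one_sub (z : ℝ) : qn q z ≤ (1 - q)⁻¹ := by
  rw [qn, div_eq_mul_inv]
  exact mul_le_of_le_one_left (inv_pos.2 (sub_pos.2 hq1)).le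
    (sub_le_self _ (Real.rpow_nonneg hq0.le z))

theorem summable_rpow_mul_qn_pow (k : ℕ) {x : ℝ} (hx : 0 ≤ x) :
    Summable fun m : ℕ => q ^ ((m : ℝ) + x) * qn q ((m : ℝ) + x) ^ k := by
  have hbound : Summable fun m : ℕ => (1 - q)⁻¹ ^ k * q ^ m :=
    (summable_geometric_of_lt_one hq0.le hq1).mul_left _
  refine hbound.of_nonneg_of_le (fun m => ?_) (fun m => ?_)
  · have := qn_nonneg hq0 hq1 (z := (m : ℝ) + x) (by positivity)
    positivity
  · rw [mul_comm, Real.rpow_add hq0, Real.rpow_natCast]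
    gcongr
    · exact qn_nonneg hq0 hq1 (by positivity)
    · exact qn_le_inv_one_sub hq0 hq1 _
    · exact mul_le_of_le_one_right (by positivity) (Real.rpow_le_one hq0.le hq1.le hx)

theorem qB_add_nat_sub_qB (k n : ℕ) {x : ℝ} (hx : 0 ≤ x) :
    qB q (x + n) (k + 1) - qB q x (k + 1)
      = ((k : ℝ) + 1) * ∑ a ∈ range n, q ^ ((a : ℝ) + x) * qn q ((a : ℝ) + x) ^ k := by
  have hsplit := (summable_rpow_mul_qn_pow hq0 hq1 k hx).sum_add_tsum_nat_add n
  have hshift : (∑' m : ℕ, q ^ ((m : ℝ) + (x + n)) * qn q ((m : ℝ) + (x + n)) ^ k)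
      = ∑' m : ℕ, q ^ (((m + n : ℕ) : ℝ) + x) * qn q (((m + n : ℕ) : ℝ) + x) ^ k := by
    refine tsum_congr fun m => ?_
    rw [show (m : ℝ) + (x + n) = ((m + n : ℕ) : ℝ) + x by push_cast; ring]
  simp only [qB, hshift]
  rw [← hsplit]
  ring

end QBernoulli

theorem q_power_sum_general (q : ℝ) (hq0 : 0 < q) (hq1 : q < 1)
    (k n : ℕ) :
    ∑ a ∈ range n, q ^ (a : ℝ) * qn q (a : ℝ) ^ k
      = (qB q (n : ℝ) (k + 1) - qB q 0 (k + 1)) / ((k : ℝ) + 1) := by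
  have h := qB_add_nat_sub_qB hq0 hq1 k n le_rfl
  simp only [zero_add, add_zero] at h
  rw [h]
  field_simp

/-- The q-power sums are given by q-Bernoulli polynomials:
`Σ_{a=0}^{n-1} q^a·[a]_q^k = (β_{k+1}(n:q) - β_{k+1}(q))/(k+1)`. -/
theorem q_power_sum (q : ℝ) (hq0 : 0 < q) (hq1 : q < 1)
    (k n : ℕ) (hk : 1 ≤ k) (hn : 1 ≤ n) :
    ∑ a ∈ range n, q ^ (a : ℝ) * qn q (a : ℝ) ^ k
      = (qB q (n : ℝ) (k + 1) - qB q 0 (k + 1)) / ((k : ℝ) + 1) :=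
  q_power_sum_general q hq0 hq1 k n
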